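/- arXiv:2311.03870 — 2 statements merged into one kernel-verified Lean document; each statement's English description precedes it below -/
import Mathlib

section
/- Let Q be a quasi-copula on [0,1]² with α_Q < ∞, where α_Q = sup_{n≥1} max{ max_i 2ⁿ Σ_{j=1}^{2ⁿ} V_Q(R_{ij}ⁿ)⁺ , max_j 2ⁿ Σ_{i=1}^{2ⁿ} V_Q(R_{ij}ⁿ)⁺ } with R_{ij}ⁿ = [(i−1)/2ⁿ, i/2ⁿ]×[(j−1)/2ⁿ, j/2ⁿ]. Then there exist copulas C and D and a real number α ≥ 1 such that Q = αC + (1−α)D. -/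
/-!
Let `A = max α_Q 1`. For `x, y ∈ [0,1]` let `N(x,y)` be the total negative `Q`-mass of the dyadic
cells of level `n` inside `[0,x] × [0,y]`, in the limit `n → ∞`; the limit exists because
quartering a cell can only increase its negative mass. By construction `N` and `Q + N` are
2-increasing. Every row (column) strip of level `n` has signed mass `2⁻ⁿ` and positive mass at
most `A 2⁻ⁿ`, hence negative mass at most `(A - 1) 2⁻ⁿ`; so `N` is `(A - 1)`-Lipschitz in each
variable. With `u x = A x - N(x,1)`, `v y = A y - N(1,y)` (increasing) and `m = A - N(1,1) ≥ 1`,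
both `D = (N + u ⊗ v / m) / A` and `C = (Q + N + u ⊗ v / m) / (A + 1)` are copulas, and
`Q = (A + 1) C - A D`.
-/

open Set

/-- A bivariate copula (conditions imposed on the unit square). -/
def IsCopula (C : ℝ → ℝ → ℝ) : Prop :=
  (∀ x ∈ Icc (0:ℝ) 1, C x 0 = 0 ∧ C 0 x = 0 ∧ C x 1 = x ∧ C 1 x = x) ∧
  (∀ x₁ ∈ Icc (0:ℝ) 1, ∀ x₂ ∈ Icc (0:ℝ) 1, ∀ y₁ ∈ Icc (0:ℝ) 1, ∀ y₂ ∈ Icc (0:ℝ) 1,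
    x₁ ≤ x₂ → y₁ ≤ y₂ → 0 ≤ C x₂ y₂ - C x₁ y₂ - C x₂ y₁ + C x₁ y₁)

/-- A bivariate quasi-copula (conditions imposed on the unit square). -/
def IsQuasiCopula (Q : ℝ → ℝ → ℝ) : Prop :=
  (∀ x ∈ Icc (0:ℝ) 1, Q x 0 = 0 ∧ Q 0 x = 0 ∧ Q x 1 = x ∧ Q 1 x = x) ∧
  (∀ x₁ ∈ Icc (0:ℝ) 1, ∀ x₂ ∈ Icc (0:ℝ) 1, ∀ y ∈ Icc (0:ℝ) 1,
    x₁ ≤ x₂ → Q x₁ y ≤ Q x₂ y) ∧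
  (∀ x ∈ Icc (0:ℝ) 1, ∀ y₁ ∈ Icc (0:ℝ) 1, ∀ y₂ ∈ Icc (0:ℝ) 1,
    y₁ ≤ y₂ → Q x y₁ ≤ Q x y₂) ∧
  (∀ x₁ ∈ Icc (0:ℝ) 1, ∀ x₂ ∈ Icc (0:ℝ) 1, ∀ y₁ ∈ Icc (0:ℝ) 1, ∀ y₂ ∈ Icc (0:ℝ) 1,
    |Q x₂ y₂ - Q x₁ y₁| ≤ |x₂ - x₁| + |y₂ - y₁|)

/-- Q-volume of the dyadic rectangle R_{ij}^n = [i/2^n,(i+1)/2^n] × [j/2^n,(j+1)/2^n]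
(indices shifted by one with respect to the paper). -/
noncomputable def dyadVol (Q : ℝ → ℝ → ℝ) (n : ℕ) (i j : Fin (2^n)) : ℝ :=
  Q (((i : ℕ) + 1) / 2^n) (((j : ℕ) + 1) / 2^n)
    - Q ((i : ℕ) / 2^n) (((j : ℕ) + 1) / 2^n)
    - Q (((i : ℕ) + 1) / 2^n) ((j : ℕ) / 2^n)
    + Q ((i : ℕ) / 2^n) ((j : ℕ) / 2^n)

/-- The set of all row/column sums of positive parts of dyadic volumes, normalized by
strip width; α_Q is its supremum. -/
noncomputable def alphaSet (Q : ℝ → ℝ → ℝ) : Set ℝ :=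
  {r | ∃ n : ℕ, 1 ≤ n ∧
    ((∃ i : Fin (2^n), r = 2^n * ∑ j : Fin (2^n), max (dyadVol Q n i j) 0) ∨
     (∃ j : Fin (2^n), r = 2^n * ∑ i : Fin (2^n), max (dyadVol Q n i j) 0))}

open Filter Topology Function

noncomputable section

def rectVol {α β M : Type*} [AddCommGroup M] (F : α → β → M) (x₁ : α) (y₁ : β) (x₂ : α)
    (y₂ : β) : M :=
  F x₂ y₂ - F x₁ y₂ - F x₂ y₁ + F x₁ y₁

def HasUniformMargins (F : ℝ → ℝ → ℝ) : Prop :=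
  ∀ x ∈ Icc (0:ℝ) 1, F x 0 = 0 ∧ F 0 x = 0 ∧ F x 1 = x ∧ F 1 x = x

def IsTwoIncreasing (F : ℝ → ℝ → ℝ) : Prop :=
  ∀ x₁ ∈ Icc (0:ℝ) 1, ∀ x₂ ∈ Icc (0:ℝ) 1, ∀ y₁ ∈ Icc (0:ℝ) 1, ∀ y₂ ∈ Icc (0:ℝ) 1,
    x₁ ≤ x₂ → y₁ ≤ y₂ → 0 ≤ rectVol F x₁ y₁ x₂ y₂

lemma sum_Ico_sum_Ico_rectVol {M : Type*} [AddCommGroup M] (g : ℕ → ℕ → M) {p₁ p₂ q₁ q₂ : ℕ}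
    (hp : p₁ ≤ p₂) (hq : q₁ ≤ q₂) :
    ∑ i ∈ Finset.Ico p₁ p₂, ∑ j ∈ Finset.Ico q₁ q₂, rectVol g i j (i + 1) (j + 1)
      = rectVol g p₁ q₁ p₂ q₂ := by
  have hrow : ∀ i, ∑ j ∈ Finset.Ico q₁ q₂, rectVol g i j (i + 1) (j + 1)
      = (g (i + 1) q₂ - g (i + 1) q₁) - (g i q₂ - g i q₁) := fun i => by
    rw [show g (i + 1) q₂ - g (i + 1) q₁ - (g i q₂ - g i q₁)
        = (g (i + 1) q₂ - g i q₂) - (g (i + 1) q₁ - g i q₁) by abel,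
      ← Finset.sum_Ico_sub (fun j => g (i + 1) j - g i j) hq]
    exact Finset.sum_congr rfl fun j _ => by simp only [rectVol]; abel
  rw [Finset.sum_congr rfl fun i _ => hrow i, Finset.sum_Ico_sub (fun i => g i q₂ - g i q₁) hp]
  simp only [rectVol]; abel

lemma tendsto_rectVol {ι α β M : Type*} [AddCommGroup M] [TopologicalSpace M]
    [IsTopologicalAddGroup M] {l : Filter ι} {F : ι → α → β → M} {G : α → β → M}
    {s : Set α} {t : Set β} (hF : ∀ x ∈ s, ∀ y ∈ t, Tendsto (fun n => F n x y) l (𝓝 (G x y)))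
    {x₁ x₂ : α} {y₁ y₂ : β} (hx₁ : x₁ ∈ s) (hx₂ : x₂ ∈ s) (hy₁ : y₁ ∈ t) (hy₂ : y₂ ∈ t) :
    Tendsto (fun n => rectVol (F n) x₁ y₁ x₂ y₂) l (𝓝 (rectVol G x₁ y₁ x₂ y₂)) :=
  (((hF x₂ hx₂ y₂ hy₂).sub (hF x₁ hx₁ y₂ hy₂)).sub (hF x₂ hx₂ y₁ hy₁)).add (hF x₁ hx₁ y₁ hy₁)

lemma IsTwoIncreasing.add {F G : ℝ → ℝ → ℝ} (hF : IsTwoIncreasing F) (hG : IsTwoIncreasing G) :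
    IsTwoIncreasing fun x y => F x y + G x y := by
  intro x₁ hx₁ x₂ hx₂ y₁ hy₁ y₂ hy₂ hx hy
  have := hF x₁ hx₁ x₂ hx₂ y₁ hy₁ y₂ hy₂ hx hy
  have := hG x₁ hx₁ x₂ hx₂ y₁ hy₁ y₂ hy₂ hx hy
  simp only [rectVol] at *
  linarith

lemma IsTwoIncreasing.div_const {F : ℝ → ℝ → ℝ} (hF : IsTwoIncreasing F) {c : ℝ} (hc : 0 ≤ c) :
    IsTwoIncreasing fun x y => F x y / c := by
  intro x₁ hx₁ x₂ hx₂ y₁ hy₁ y₂ hy₂ hx hy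
  have hvol : rectVol (fun x y => F x y / c) x₁ y₁ x₂ y₂ = rectVol F x₁ y₁ x₂ y₂ / c := by
    simp only [rectVol]; ring
  rw [hvol]
  exact div_nonneg (hF x₁ hx₁ x₂ hx₂ y₁ hy₁ y₂ hy₂ hx hy) hc

lemma IsQuasiCopula.continuousOn {Q : ℝ → ℝ → ℝ} (hQ : IsQuasiCopula Q) :
    ContinuousOn (uncurry Q) (Icc 0 1 ×ˢ Icc 0 1) := by
  refine (LipschitzOnWith.of_dist_le_mul (K := 2) fun p hp q hq => ?_).continuousOn
  have h := hQ.2.2.2 q.1 hq.1 p.1 hp.1 q.2 hq.2 p.2 hp.2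
  rw [Prod.dist_eq, Real.dist_eq, Real.dist_eq, Real.dist_eq]
  simp only [uncurry, NNReal.coe_ofNat]
  linarith [le_max_left |p.1 - q.1| |p.2 - q.2|, le_max_right |p.1 - q.1| |p.2 - q.2|]

def marginCorrection (N : ℝ → ℝ → ℝ) (A x y : ℝ) : ℝ :=
  (A * x - N x 1) * (A * y - N 1 y) / (A - N 1 1)

section Decomposition

variable {N : ℝ → ℝ → ℝ} {A : ℝ}

lemma isTwoIncreasing_marginCorrection (hu : MonotoneOn (fun x => A * x - N x 1) (Icc 0 1))
    (hv : MonotoneOn (fun y => A * y - N 1 y) (Icc 0 1)) (hm : N 1 1 ≤ A) :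
    IsTwoIncreasing (marginCorrection N A) := by
  intro x₁ hx₁ x₂ hx₂ y₁ hy₁ y₂ hy₂ hx hy
  have hvol : rectVol (marginCorrection N A) x₁ y₁ x₂ y₂
      = ((A * x₂ - N x₂ 1) - (A * x₁ - N x₁ 1)) * ((A * y₂ - N 1 y₂) - (A * y₁ - N 1 y₁))
        / (A - N 1 1) := by
    simp only [rectVol, marginCorrection]; ring
  rw [hvol]
  exact div_nonneg (mul_nonneg (sub_nonneg.2 (hu hx₁ hx₂ hx)) (sub_nonneg.2 (hv hy₁ hy₂ hy)))
    (sub_nonneg.2 hm)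

lemma marginCorrection_margins (hN : ∀ x ∈ Icc (0:ℝ) 1, N x 0 = 0 ∧ N 0 x = 0) (hm : N 1 1 < A)
    (x : ℝ) :
    marginCorrection N A x 0 = 0 ∧ marginCorrection N A 0 x = 0 ∧
      marginCorrection N A x 1 = A * x - N x 1 ∧ marginCorrection N A 1 x = A * x - N 1 x := by
  have hm' : A - N 1 1 ≠ 0 := sub_ne_zero.2 hm.ne'
  have h1 : (1:ℝ) ∈ Icc 0 1 := ⟨zero_le_one, le_rfl⟩
  simp only [marginCorrection, (hN 1 h1).1, (hN 1 h1).2]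
  refine ⟨by simp, by simp, ?_, ?_⟩ <;> field_simp

lemma isCopula_add_marginCorrection_div (hA : 0 < A) (hN : ∀ x ∈ Icc (0:ℝ) 1, N x 0 = 0 ∧ N 0 x = 0)
    (hu : MonotoneOn (fun x => A * x - N x 1) (Icc 0 1))
    (hv : MonotoneOn (fun y => A * y - N 1 y) (Icc 0 1)) (hm : N 1 1 < A)
    (hN₂ : IsTwoIncreasing N) :
    IsCopula fun x y => (N x y + marginCorrection N A x y) / A := by
  refine ⟨fun x hx => ?_, (hN₂.add (isTwoIncreasing_marginCorrection hu hv hm.le)).div_const hA.le⟩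
  obtain ⟨hP0, hP0', hP1, hP1'⟩ := marginCorrection_margins hN hm x
  simp only [hP0, hP0', hP1, hP1', (hN x hx).1, (hN x hx).2]
  refine ⟨by simp, by simp, ?_, ?_⟩ <;> field_simp <;> ring

lemma isCopula_add_add_marginCorrection_div {Q : ℝ → ℝ → ℝ} (hA : 0 < A) (hQ : HasUniformMargins Q)
    (hN : ∀ x ∈ Icc (0:ℝ) 1, N x 0 = 0 ∧ N 0 x = 0)
    (hu : MonotoneOn (fun x => A * x - N x 1) (Icc 0 1))
    (hv : MonotoneOn (fun y => A * y - N 1 y) (Icc 0 1)) (hm : N 1 1 < A)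
    (hQN : IsTwoIncreasing fun x y => Q x y + N x y) :
    IsCopula fun x y => (Q x y + N x y + marginCorrection N A x y) / (A + 1) := by
  refine ⟨fun x hx => ?_,
    (hQN.add (isTwoIncreasing_marginCorrection hu hv hm.le)).div_const (by linarith)⟩
  obtain ⟨hP0, hP0', hP1, hP1'⟩ := marginCorrection_margins hN hm x
  obtain ⟨hQ0, hQ0', hQ1, hQ1'⟩ := hQ x hx
  simp only [hP0, hP0', hP1, hP1', hQ0, hQ0', hQ1, hQ1', (hN x hx).1, (hN x hx).2]
  have : A + 1 ≠ 0 := by linarith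
  refine ⟨by simp, by simp, ?_, ?_⟩ <;> field_simp <;> ring

theorem exists_copula_decomposition {Q : ℝ → ℝ → ℝ} (hA : 0 < A) (hQ : HasUniformMargins Q)
    (hN : ∀ x ∈ Icc (0:ℝ) 1, N x 0 = 0 ∧ N 0 x = 0)
    (hu : MonotoneOn (fun x => A * x - N x 1) (Icc 0 1))
    (hv : MonotoneOn (fun y => A * y - N 1 y) (Icc 0 1)) (hm : N 1 1 < A)
    (hN₂ : IsTwoIncreasing N) (hQN : IsTwoIncreasing fun x y => Q x y + N x y) :
    ∃ (C D : ℝ → ℝ → ℝ) (α : ℝ), IsCopula C ∧ IsCopula D ∧ 1 ≤ α ∧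
      ∀ x ∈ Icc (0:ℝ) 1, ∀ y ∈ Icc (0:ℝ) 1, Q x y = α * C x y + (1 - α) * D x y :=
  ⟨_, _, A + 1, isCopula_add_add_marginCorrection_div hA hQ hN hu hv hm hQN,
    isCopula_add_marginCorrection_div hA hN hu hv hm hN₂, by linarith,
    fun x _ y _ => by field_simp; ring⟩

end Decomposition

def dyad (n i : ℕ) : ℝ := i / 2 ^ n

lemma dyad_two_mul (n i : ℕ) : dyad (n + 1) (2 * i) = dyad n i := by
  simp only [dyad]; push_cast; rw [pow_succ]; field_simp

lemma dyad_mem_Icc {n i : ℕ} (h : i ≤ 2 ^ n) : dyad n i ∈ Icc (0:ℝ) 1 :=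
  ⟨by unfold dyad; positivity, div_le_one_of_le₀ (by exact_mod_cast h) (by positivity)⟩

def dyadicGrid (Q : ℝ → ℝ → ℝ) (n : ℕ) (i j : ℕ) : ℝ := Q (dyad n i) (dyad n j)

def cellVol (Q : ℝ → ℝ → ℝ) (n i j : ℕ) : ℝ := rectVol (dyadicGrid Q n) i j (i + 1) (j + 1)

lemma dyadVol_eq_cellVol (Q : ℝ → ℝ → ℝ) (n : ℕ) (i j : Fin (2 ^ n)) :
    dyadVol Q n i j = cellVol Q n i j := by
  simp [dyadVol, cellVol, rectVol, dyadicGrid, dyad]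

lemma cellVol_swap (Q : ℝ → ℝ → ℝ) (n i j : ℕ) : cellVol (swap Q) n i j = cellVol Q n j i := by
  simp only [cellVol, rectVol, dyadicGrid, swap]; abel

lemma sum_posPart_dyadVol_row (Q : ℝ → ℝ → ℝ) (n : ℕ) (i : Fin (2 ^ n)) :
    ∑ j : Fin (2 ^ n), max (dyadVol Q n i j) 0
      = ∑ j ∈ Finset.range (2 ^ n), (cellVol Q n i j)⁺ := by
  rw [← Fin.sum_univ_eq_sum_range (fun j => (cellVol Q n i j)⁺)]
  simp only [dyadVol_eq_cellVol]
  rfl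

lemma sum_posPart_dyadVol_col (Q : ℝ → ℝ → ℝ) (n : ℕ) (j : Fin (2 ^ n)) :
    ∑ i : Fin (2 ^ n), max (dyadVol Q n i j) 0
      = ∑ i ∈ Finset.range (2 ^ n), (cellVol Q n i j)⁺ := by
  rw [← Fin.sum_univ_eq_sum_range (fun i => (cellVol Q n i j)⁺)]
  simp only [dyadVol_eq_cellVol]
  rfl

lemma rectVol_dyadicGrid (Q : ℝ → ℝ → ℝ) (n : ℕ) {p₁ p₂ q₁ q₂ : ℕ} (hp : p₁ ≤ p₂) (hq : q₁ ≤ q₂) :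
    rectVol (dyadicGrid Q n) p₁ q₁ p₂ q₂
      = ∑ i ∈ Finset.Ico p₁ p₂, ∑ j ∈ Finset.Ico q₁ q₂, cellVol Q n i j :=
  (sum_Ico_sum_Ico_rectVol _ hp hq).symm

lemma sum_cellVol_row {Q : ℝ → ℝ → ℝ} (h0 : ∀ x ∈ Icc (0:ℝ) 1, Q x 0 = 0)
    (h1 : ∀ x ∈ Icc (0:ℝ) 1, Q x 1 = x) {n i : ℕ} (hi : i < 2 ^ n) :
    ∑ j ∈ Finset.range (2 ^ n), cellVol Q n i j = 1 / 2 ^ n := by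
  have hrow := rectVol_dyadicGrid Q n (Nat.le_succ i) (Nat.zero_le (2 ^ n))
  rw [Nat.Ico_succ_singleton, Finset.sum_singleton, ← Finset.range_eq_Ico] at hrow
  have htop : dyad n (2 ^ n) = 1 := by simp [dyad]
  have hbot : dyad n 0 = 0 := by simp [dyad]
  rw [← hrow, rectVol, dyadicGrid, dyadicGrid, dyadicGrid, dyadicGrid, htop, hbot,
    h1 _ (dyad_mem_Icc hi), h1 _ (dyad_mem_Icc hi.le), h0 _ (dyad_mem_Icc hi),
    h0 _ (dyad_mem_Icc hi.le)]
  simp only [dyad]; push_cast; ring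

def negMass (Q : ℝ → ℝ → ℝ) (n p q : ℕ) : ℝ :=
  ∑ i ∈ Finset.range p, ∑ j ∈ Finset.range q, (cellVol Q n i j)⁻

@[simp] lemma negMass_zero_left (Q : ℝ → ℝ → ℝ) (n q : ℕ) : negMass Q n 0 q = 0 := by
  simp [negMass]

@[simp] lemma negMass_zero_right (Q : ℝ → ℝ → ℝ) (n p : ℕ) : negMass Q n p 0 = 0 := by
  simp [negMass]

lemma negMass_swap (Q : ℝ → ℝ → ℝ) (n p q : ℕ) : negMass (swap Q) n p q = negMass Q n q p := by
  simp only [negMass, cellVol_swap]; exact Finset.sum_comm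

lemma negMass_mono (Q : ℝ → ℝ → ℝ) (n : ℕ) {p p' q q' : ℕ} (hp : p ≤ p') (hq : q ≤ q') :
    negMass Q n p q ≤ negMass Q n p' q' := by
  unfold negMass
  calc ∑ i ∈ Finset.range p, ∑ j ∈ Finset.range q, (cellVol Q n i j)⁻
      ≤ ∑ i ∈ Finset.range p, ∑ j ∈ Finset.range q', (cellVol Q n i j)⁻ :=
        Finset.sum_le_sum fun i _ => Finset.sum_le_sum_of_subset_of_nonneg
          (Finset.range_subset_range.2 hq) fun _ _ _ => negPart_nonneg _
    _ ≤ _ := Finset.sum_le_sum_of_subset_of_nonneg (Finset.range_subset_range.2 hp)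
          fun _ _ _ => Finset.sum_nonneg fun _ _ => negPart_nonneg _

lemma rectVol_negMass (Q : ℝ → ℝ → ℝ) (n : ℕ) {p₁ p₂ q₁ q₂ : ℕ} (hp : p₁ ≤ p₂) (hq : q₁ ≤ q₂) :
    rectVol (negMass Q n) p₁ q₁ p₂ q₂
      = ∑ i ∈ Finset.Ico p₁ p₂, ∑ j ∈ Finset.Ico q₁ q₂, (cellVol Q n i j)⁻ := by
  rw [← sum_Ico_sum_Ico_rectVol _ hp hq]
  refine Finset.sum_congr rfl fun i _ => Finset.sum_congr rfl fun j _ => ?_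
  simp only [rectVol, negMass, Finset.sum_range_succ, Finset.sum_add_distrib]
  abel

lemma rectVol_negMass_nonneg (Q : ℝ → ℝ → ℝ) (n : ℕ) {p₁ p₂ q₁ q₂ : ℕ} (hp : p₁ ≤ p₂)
    (hq : q₁ ≤ q₂) : 0 ≤ rectVol (negMass Q n) p₁ q₁ p₂ q₂ := by
  rw [rectVol_negMass Q n hp hq]
  exact Finset.sum_nonneg fun _ _ => Finset.sum_nonneg fun _ _ => negPart_nonneg _

lemma rectVol_dyadicGrid_add_rectVol_negMass_nonneg (Q : ℝ → ℝ → ℝ) (n : ℕ) {p₁ p₂ q₁ q₂ : ℕ}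
    (hp : p₁ ≤ p₂) (hq : q₁ ≤ q₂) :
    0 ≤ rectVol (dyadicGrid Q n) p₁ q₁ p₂ q₂ + rectVol (negMass Q n) p₁ q₁ p₂ q₂ := by
  rw [rectVol_dyadicGrid Q n hp hq, rectVol_negMass Q n hp hq, ← Finset.sum_add_distrib]
  refine Finset.sum_nonneg fun i _ => ?_
  rw [← Finset.sum_add_distrib]
  exact Finset.sum_nonneg fun j _ => by
    linarith [posPart_sub_negPart (cellVol Q n i j), posPart_nonneg (cellVol Q n i j)]

lemma negPart_cellVol_le (Q : ℝ → ℝ → ℝ) (n i j : ℕ) :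
    (cellVol Q n i j)⁻
      ≤ rectVol (negMass Q (n + 1)) (2 * i) (2 * j) (2 * (i + 1)) (2 * (j + 1)) := by
  have hi : 2 * i ≤ 2 * (i + 1) := by omega
  have hj : 2 * j ≤ 2 * (j + 1) := by omega
  have hcell : cellVol Q n i j
      = rectVol (dyadicGrid Q (n + 1)) (2 * i) (2 * j) (2 * (i + 1)) (2 * (j + 1)) := by
    simp only [cellVol, rectVol, dyadicGrid, dyad_two_mul]
  have := rectVol_dyadicGrid_add_rectVol_negMass_nonneg Q (n + 1) hi hj
  rw [negPart_def]
  exact sup_le (by linarith) (rectVol_negMass_nonneg Q (n + 1) hi hj)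

lemma negMass_le_negMass_succ (Q : ℝ → ℝ → ℝ) (n p q : ℕ) :
    negMass Q n p q ≤ negMass Q (n + 1) (2 * p) (2 * q) := by
  let g : ℕ → ℕ → ℝ := fun i j => negMass Q (n + 1) (2 * i) (2 * j)
  calc negMass Q n p q
      ≤ ∑ i ∈ Finset.Ico 0 p, ∑ j ∈ Finset.Ico 0 q, rectVol g i j (i + 1) (j + 1) := by
        rw [negMass, Finset.range_eq_Ico, Finset.range_eq_Ico]
        exact Finset.sum_le_sum fun i _ => Finset.sum_le_sum fun j _ => negPart_cellVol_le Q n i j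
    _ = negMass Q (n + 1) (2 * p) (2 * q) := by
        rw [sum_Ico_sum_Ico_rectVol g (Nat.zero_le p) (Nat.zero_le q)]
        simp [rectVol, g]

def negApprox (Q : ℝ → ℝ → ℝ) (n : ℕ) (x y : ℝ) : ℝ := negMass Q n ⌊x * 2 ^ n⌋₊ ⌊y * 2 ^ n⌋₊

-- On the unit square this is the limit of the increasing bounded sequence `negApprox Q · x y`
-- (`NegRowBound.tendsto_negApprox`); elsewhere the `⨆` may be a junk value.
def negLimit (Q : ℝ → ℝ → ℝ) (x y : ℝ) : ℝ := ⨆ n, negApprox Q n x y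

lemma floor_mul_two_pow_le {x : ℝ} (hx : x ≤ 1) (n : ℕ) : ⌊x * 2 ^ n⌋₊ ≤ 2 ^ n :=
  Nat.floor_le_of_le (by push_cast; exact mul_le_of_le_one_left (by positivity) hx)

lemma two_mul_floor_le {x : ℝ} (hx : 0 ≤ x) (n : ℕ) : 2 * ⌊x * 2 ^ n⌋₊ ≤ ⌊x * 2 ^ (n + 1)⌋₊ :=
  Nat.le_floor <| by
    push_cast
    rw [pow_succ]
    nlinarith [Nat.floor_le (by positivity : 0 ≤ x * 2 ^ n)]

lemma negApprox_le_succ (Q : ℝ → ℝ → ℝ) (n : ℕ) {x y : ℝ} (hx : 0 ≤ x) (hy : 0 ≤ y) :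
    negApprox Q n x y ≤ negApprox Q (n + 1) x y :=
  (negMass_le_negMass_succ Q n _ _).trans
    (negMass_mono Q (n + 1) (two_mul_floor_le hx n) (two_mul_floor_le hy n))

lemma negLimit_swap (Q : ℝ → ℝ → ℝ) (x y : ℝ) : negLimit (swap Q) x y = negLimit Q y x := by
  simp only [negLimit, negApprox, negMass_swap]

@[simp] lemma negLimit_apply_zero (Q : ℝ → ℝ → ℝ) (x : ℝ) : negLimit Q x 0 = 0 := by
  simp [negLimit, negApprox]

@[simp] lemma negLimit_zero_apply (Q : ℝ → ℝ → ℝ) (y : ℝ) : negLimit Q 0 y = 0 := by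
  simp [negLimit, negApprox]

lemma tendsto_dyad_floor {x : ℝ} (hx : 0 ≤ x) :
    Tendsto (fun n : ℕ => dyad n ⌊x * 2 ^ n⌋₊) atTop (𝓝 x) :=
  (tendsto_nat_floor_mul_div_atTop hx).comp (tendsto_pow_atTop_atTop_of_one_lt one_lt_two)

lemma tendsto_dyadicGrid_floor {Q : ℝ → ℝ → ℝ} (hQ : ContinuousOn (uncurry Q) (Icc 0 1 ×ˢ Icc 0 1))
    {x y : ℝ} (hx : x ∈ Icc (0:ℝ) 1) (hy : y ∈ Icc (0:ℝ) 1) :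
    Tendsto (fun n => dyadicGrid Q n ⌊x * 2 ^ n⌋₊ ⌊y * 2 ^ n⌋₊) atTop (𝓝 (Q x y)) :=
  (hQ (x, y) ⟨hx, hy⟩).tendsto.comp <| tendsto_nhdsWithin_iff.2
    ⟨(tendsto_dyad_floor hx.1).prodMk_nhds (tendsto_dyad_floor hy.1), Eventually.of_forall
      fun n => ⟨dyad_mem_Icc (floor_mul_two_pow_le hx.2 n),
        dyad_mem_Icc (floor_mul_two_pow_le hy.2 n)⟩⟩

def NegRowBound (Q : ℝ → ℝ → ℝ) (B : ℝ) : Prop :=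
  ∀ n i, i < 2 ^ n → ∑ j ∈ Finset.range (2 ^ n), (cellVol Q n i j)⁻ ≤ B / 2 ^ n

lemma negRowBound_of_sum_posPart_le {Q : ℝ → ℝ → ℝ} {A : ℝ}
    (h0 : ∀ x ∈ Icc (0:ℝ) 1, Q x 0 = 0) (h1 : ∀ x ∈ Icc (0:ℝ) 1, Q x 1 = x)
    (hpos : ∀ n i, i < 2 ^ n → ∑ j ∈ Finset.range (2 ^ n), (cellVol Q n i j)⁺ ≤ A / 2 ^ n) :
    NegRowBound Q (A - 1) := by
  intro n i hi
  have hsplit : ∑ j ∈ Finset.range (2 ^ n), (cellVol Q n i j)⁻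
      = ∑ j ∈ Finset.range (2 ^ n), (cellVol Q n i j)⁺
        - ∑ j ∈ Finset.range (2 ^ n), cellVol Q n i j := by
    rw [← Finset.sum_sub_distrib]
    exact Finset.sum_congr rfl fun j _ => by linarith [posPart_sub_negPart (cellVol Q n i j)]
  rw [hsplit, sum_cellVol_row h0 h1 hi, sub_div]
  linarith [hpos n i hi]

lemma sum_posPart_cellVol_le {Q : ℝ → ℝ → ℝ} (hQ : HasUniformMargins Q)
    (hbdd : BddAbove (alphaSet Q)) {n i : ℕ} (hi : i < 2 ^ n) :
    ∑ j ∈ Finset.range (2 ^ n), (cellVol Q n i j)⁺ ≤ max (sSup (alphaSet Q)) 1 / 2 ^ n ∧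
      ∑ j ∈ Finset.range (2 ^ n), (cellVol Q n j i)⁺ ≤ max (sSup (alphaSet Q)) 1 / 2 ^ n := by
  rcases n with _ | n
  · -- `alphaSet` omits level 0, whose only cell is the unit square, of volume 1.
    obtain rfl : i = 0 := by simpa using hi
    have h1 := hQ 1 ⟨zero_le_one, le_rfl⟩
    have hcell : cellVol Q 0 0 0 = 1 := by
      simp [cellVol, rectVol, dyadicGrid, dyad, h1.1, h1.2.1, h1.2.2.1,
        (hQ 0 ⟨le_rfl, zero_le_one⟩).1]
    simp [hcell]
  have hle : ∀ r ∈ alphaSet Q, r ≤ max (sSup (alphaSet Q)) 1 := fun r hr =>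
    (le_csSup hbdd hr).trans (le_max_left _ _)
  rw [le_div_iff₀' (by positivity), le_div_iff₀' (by positivity),
    ← sum_posPart_dyadVol_row Q _ ⟨i, hi⟩, ← sum_posPart_dyadVol_col Q _ ⟨i, hi⟩]
  exact ⟨hle _ ⟨n + 1, Nat.le_add_left 1 n, Or.inl ⟨⟨i, hi⟩, rfl⟩⟩,
    hle _ ⟨n + 1, Nat.le_add_left 1 n, Or.inr ⟨⟨i, hi⟩, rfl⟩⟩⟩

lemma negRowBound_of_bddAbove {Q : ℝ → ℝ → ℝ} (hQ : HasUniformMargins Q)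
    (hbdd : BddAbove (alphaSet Q)) :
    NegRowBound Q (max (sSup (alphaSet Q)) 1 - 1) ∧
      NegRowBound (swap Q) (max (sSup (alphaSet Q)) 1 - 1) :=
  ⟨negRowBound_of_sum_posPart_le (fun x hx => (hQ x hx).1) (fun x hx => (hQ x hx).2.2.1)
      fun _ _ hi => (sum_posPart_cellVol_le hQ hbdd hi).1,
    negRowBound_of_sum_posPart_le (fun x hx => (hQ x hx).2.1) (fun x hx => (hQ x hx).2.2.2)
      fun _ _ hi => by simpa only [cellVol_swap] using (sum_posPart_cellVol_le hQ hbdd hi).2⟩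

namespace NegRowBound

variable {Q : ℝ → ℝ → ℝ} {B : ℝ}

lemma nonneg (h : NegRowBound Q B) : 0 ≤ B := by
  simpa using (Finset.sum_nonneg fun j _ => negPart_nonneg _).trans (h 0 0 one_pos)

lemma negMass_sub_le (h : NegRowBound Q B) {n p₁ p₂ q : ℕ} (hp : p₁ ≤ p₂) (hp₂ : p₂ ≤ 2 ^ n)
    (hq : q ≤ 2 ^ n) : negMass Q n p₂ q - negMass Q n p₁ q ≤ B * ((p₂ : ℝ) - p₁) / 2 ^ n := by
  calc negMass Q n p₂ q - negMass Q n p₁ q = rectVol (negMass Q n) p₁ 0 p₂ q := by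
        simp [rectVol]
    _ = ∑ i ∈ Finset.Ico p₁ p₂, ∑ j ∈ Finset.Ico 0 q, (cellVol Q n i j)⁻ :=
        rectVol_negMass Q n hp (Nat.zero_le q)
    _ ≤ ∑ i ∈ Finset.Ico p₁ p₂, B / 2 ^ n := by
        refine Finset.sum_le_sum fun i hi => le_trans ?_ (h n i ?_)
        · rw [← Finset.range_eq_Ico]
          exact Finset.sum_le_sum_of_subset_of_nonneg (Finset.range_subset_range.2 hq)
            fun _ _ _ => negPart_nonneg _
        · exact (Finset.mem_Ico.1 hi).2.trans_le hp₂
    _ = B * ((p₂ : ℝ) - p₁) / 2 ^ n := by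
        rw [Finset.sum_const, Nat.card_Ico, nsmul_eq_mul, Nat.cast_sub hp]; ring

lemma negApprox_le (h : NegRowBound Q B) (n : ℕ) {x y : ℝ} (hx : x ≤ 1) (hy : y ≤ 1) :
    negApprox Q n x y ≤ B := by
  have hp := floor_mul_two_pow_le hx n
  have hmass := h.negMass_sub_le (Nat.zero_le _) hp (floor_mul_two_pow_le hy n)
  rw [negMass_zero_left, sub_zero, Nat.cast_zero, sub_zero] at hmass
  calc negApprox Q n x y ≤ B * ⌊x * 2 ^ n⌋₊ / 2 ^ n := hmass
    _ ≤ B * 2 ^ n / 2 ^ n := by gcongr; exacts [h.nonneg, by exact_mod_cast hp]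
    _ = B := by field_simp

lemma negApprox_sub_le (h : NegRowBound Q B) (n : ℕ) {x₁ x₂ y : ℝ} (hx₁ : 0 ≤ x₁) (hx : x₁ ≤ x₂)
    (hx₂ : x₂ ≤ 1) (hy : y ≤ 1) :
    negApprox Q n x₂ y - negApprox Q n x₁ y ≤ B * (x₂ - x₁) + B / 2 ^ n := by
  have hfloor : (⌊x₂ * 2 ^ n⌋₊ : ℝ) - ⌊x₁ * 2 ^ n⌋₊ ≤ (x₂ - x₁) * 2 ^ n + 1 := by
    have := Nat.floor_le (mul_nonneg (hx₁.trans hx) (by positivity : (0:ℝ) ≤ 2 ^ n))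
    have := Nat.lt_floor_add_one (x₁ * 2 ^ n)
    linarith
  calc negApprox Q n x₂ y - negApprox Q n x₁ y
      ≤ B * ((⌊x₂ * 2 ^ n⌋₊ : ℝ) - ⌊x₁ * 2 ^ n⌋₊) / 2 ^ n :=
        h.negMass_sub_le (Nat.floor_le_floor (by gcongr)) (floor_mul_two_pow_le hx₂ n)
          (floor_mul_two_pow_le hy n)
    _ ≤ B * ((x₂ - x₁) * 2 ^ n + 1) / 2 ^ n := by gcongr; exact h.nonneg
    _ = B * (x₂ - x₁) + B / 2 ^ n := by field_simp

lemma tendsto_negApprox (h : NegRowBound Q B) {x y : ℝ} (hx : x ∈ Icc (0:ℝ) 1)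
    (hy : y ∈ Icc (0:ℝ) 1) :
    Tendsto (fun n => negApprox Q n x y) atTop (𝓝 (negLimit Q x y)) :=
  tendsto_atTop_ciSup (monotone_nat_of_le_succ fun n => negApprox_le_succ Q n hx.1 hy.1)
    ⟨B, by rintro _ ⟨n, rfl⟩; exact h.negApprox_le n hx.2 hy.2⟩

lemma negLimit_le (h : NegRowBound Q B) {x y : ℝ} (hx : x ∈ Icc (0:ℝ) 1)
    (hy : y ∈ Icc (0:ℝ) 1) : negLimit Q x y ≤ B :=
  le_of_tendsto' (h.tendsto_negApprox hx hy) fun n => h.negApprox_le n hx.2 hy.2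

lemma negLimit_sub_le (h : NegRowBound Q B) {x₁ x₂ y : ℝ} (hx₁ : 0 ≤ x₁) (hx : x₁ ≤ x₂)
    (hx₂ : x₂ ≤ 1) (hy : y ∈ Icc (0:ℝ) 1) :
    negLimit Q x₂ y - negLimit Q x₁ y ≤ B * (x₂ - x₁) := by
  have hlim := ((h.tendsto_negApprox ⟨hx₁.trans hx, hx₂⟩ hy).sub
    (h.tendsto_negApprox ⟨hx₁, hx.trans hx₂⟩ hy)).sub
    (tendsto_const_nhds.div_atTop (tendsto_pow_atTop_atTop_of_one_lt one_lt_two) (a := B))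
  rw [sub_zero] at hlim
  exact le_of_tendsto' hlim fun n => by linarith [h.negApprox_sub_le n hx₁ hx hx₂ hy.2]

lemma isTwoIncreasing_negLimit (h : NegRowBound Q B) : IsTwoIncreasing (negLimit Q) := by
  intro x₁ hx₁ x₂ hx₂ y₁ hy₁ y₂ hy₂ hx hy
  refine ge_of_tendsto' (tendsto_rectVol (fun x hx y hy => h.tendsto_negApprox hx hy)
    hx₁ hx₂ hy₁ hy₂) fun n => ?_
  exact rectVol_negMass_nonneg Q n (Nat.floor_le_floor (by gcongr)) (Nat.floor_le_floor (by gcongr))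

lemma monotoneOn_mul_sub_negLimit {A : ℝ} (h : NegRowBound Q (A - 1)) {y : ℝ}
    (hy : y ∈ Icc (0:ℝ) 1) :
    MonotoneOn (fun x => A * x - negLimit Q x y) (Icc 0 1) := fun x₁ hx₁ x₂ hx₂ hx => by
  have := h.negLimit_sub_le hx₁.1 hx hx₂.2 hy
  dsimp only
  linarith

lemma isTwoIncreasing_add_negLimit (h : NegRowBound Q B)
    (hQ : ContinuousOn (uncurry Q) (Icc 0 1 ×ˢ Icc 0 1)) :
    IsTwoIncreasing fun x y => Q x y + negLimit Q x y := by
  intro x₁ hx₁ x₂ hx₂ y₁ hy₁ y₂ hy₂ hx hy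
  refine ge_of_tendsto' (tendsto_rectVol (F := fun n x y =>
      dyadicGrid Q n ⌊x * 2 ^ n⌋₊ ⌊y * 2 ^ n⌋₊ + negApprox Q n x y)
    (fun x hx y hy => (tendsto_dyadicGrid_floor hQ hx hy).add (h.tendsto_negApprox hx hy))
    hx₁ hx₂ hy₁ hy₂) fun n => ?_
  have := rectVol_dyadicGrid_add_rectVol_negMass_nonneg Q n
    (Nat.floor_le_floor (by gcongr) : ⌊x₁ * 2 ^ n⌋₊ ≤ ⌊x₂ * 2 ^ n⌋₊)
    (Nat.floor_le_floor (by gcongr) : ⌊y₁ * 2 ^ n⌋₊ ≤ ⌊y₂ * 2 ^ n⌋₊)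
  simp only [rectVol, negApprox] at this ⊢
  linarith

end NegRowBound

end

theorem stmt15 (Q : ℝ → ℝ → ℝ) (hQ : IsQuasiCopula Q)
    (hbdd : BddAbove (alphaSet Q)) :
    ∃ (C D : ℝ → ℝ → ℝ) (α : ℝ), IsCopula C ∧ IsCopula D ∧ 1 ≤ α ∧
      ∀ x ∈ Icc (0:ℝ) 1, ∀ y ∈ Icc (0:ℝ) 1,
        Q x y = α * C x y + (1 - α) * D x y := by
  set A := max (sSup (alphaSet Q)) 1
  have hM : HasUniformMargins Q := hQ.1
  have h1 : (1:ℝ) ∈ Icc 0 1 := ⟨zero_le_one, le_rfl⟩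
  obtain ⟨hrow, hcol⟩ := negRowBound_of_bddAbove hM hbdd
  have hv := hcol.monotoneOn_mul_sub_negLimit h1
  simp only [negLimit_swap] at hv
  have hm : negLimit Q 1 1 < A := by linarith [hrow.negLimit_le h1 h1]
  exact exists_copula_decomposition (one_pos.trans_le (le_max_right _ _)) hM
    (fun x _ => ⟨negLimit_apply_zero Q x, negLimit_zero_apply Q x⟩)
    (hrow.monotoneOn_mul_sub_negLimit h1) hv hm hrow.isTwoIncreasing_negLimit
    (hrow.isTwoIncreasing_add_negLimit hQ.continuousOn)
end

section
/- If Q = α₁C₁ + α₂C₂ is a proper quasi-copula (not a copula) written as a linear combination of copulas C₁, C₂ with α₁ + α₂ = 1, then exactly one of α₁, α₂ is negative. Moreover, assuming α₂ < 0, for any copula C₃ and any α₃ > 0 there exist copulas C₁', C₂' and coefficients α₁' = α₁ + α₃, α₂' = α₂ − α₃ such that Q = α₁'C₁' + α₂'C₂' and |α₁'| + |α₂'| > |α₁| + |α₂|. -/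
open Set

/-! Copulas are closed under convex combinations, so a proper quasi-copula can only be an
affine combination of two copulas with one negative coefficient. Given α₂ < 0 < α₁, the weight
α₃ put on C₃ is absorbed by rescaling: both C₁' and C₂' are again convex combinations, and the
total variation |α₁| + |α₂| = α₁ - α₂ grows by 2α₃. -/

theorem IsCopula.of_eqOn_convex_combination {C₁ C₂ Q : ℝ → ℝ → ℝ} {a b : ℝ}
    (hC₁ : IsCopula C₁) (hC₂ : IsCopula C₂) (ha : 0 ≤ a) (hb : 0 ≤ b) (hab : a + b = 1)
    (hrep : ∀ x ∈ Icc (0:ℝ) 1, ∀ y ∈ Icc (0:ℝ) 1, Q x y = a * C₁ x y + b * C₂ x y) :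
    IsCopula Q := by
  have h0 : (0:ℝ) ∈ Icc (0:ℝ) 1 := left_mem_Icc.2 zero_le_one
  have h1 : (1:ℝ) ∈ Icc (0:ℝ) 1 := right_mem_Icc.2 zero_le_one
  refine ⟨fun x hx => ?_, fun x₁ hx₁ x₂ hx₂ y₁ hy₁ y₂ hy₂ hx hy => ?_⟩
  · obtain ⟨c0, c0', c1, c1'⟩ := hC₁.1 x hx
    obtain ⟨d0, d0', d1, d1'⟩ := hC₂.1 x hx
    simp only [hrep x hx 0 h0, hrep 0 h0 x hx, hrep x hx 1 h1, hrep 1 h1 x hx,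
      c0, c0', c1, c1', d0, d0', d1, d1', ← add_mul, hab]
    norm_num
  · have hvol₁ := hC₁.2 x₁ hx₁ x₂ hx₂ y₁ hy₁ y₂ hy₂ hx hy
    have hvol₂ := hC₂.2 x₁ hx₁ x₂ hx₂ y₁ hy₁ y₂ hy₂ hx hy
    rw [hrep x₁ hx₁ y₁ hy₁, hrep x₁ hx₁ y₂ hy₂, hrep x₂ hx₂ y₁ hy₁, hrep x₂ hx₂ y₂ hy₂]
    nlinarith [mul_nonneg ha hvol₁, mul_nonneg hb hvol₂]

theorem coeff_neg_of_not_isCopula {Q C₁ C₂ : ℝ → ℝ → ℝ} {α₁ α₂ : ℝ}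
    (hproper : ¬ IsCopula Q) (hC₁ : IsCopula C₁) (hC₂ : IsCopula C₂) (hsum : α₁ + α₂ = 1)
    (hrep : ∀ x ∈ Icc (0:ℝ) 1, ∀ y ∈ Icc (0:ℝ) 1, Q x y = α₁ * C₁ x y + α₂ * C₂ x y) :
    (α₁ < 0 ∧ 0 ≤ α₂) ∨ (α₂ < 0 ∧ 0 ≤ α₁) := by
  rcases le_or_gt 0 α₁ with h₁ | h₁
  · exact .inr ⟨lt_of_not_ge fun h₂ =>
      hproper (.of_eqOn_convex_combination hC₁ hC₂ h₁ h₂ hsum hrep), h₁⟩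
  · exact .inl ⟨h₁, by linarith⟩

theorem exists_isCopula_shift_coeffs {C₁ C₂ C₃ : ℝ → ℝ → ℝ} {α₁ α₂ α₃ : ℝ}
    (hC₁ : IsCopula C₁) (hC₂ : IsCopula C₂) (hC₃ : IsCopula C₃)
    (hα₁ : 0 ≤ α₁) (hα₂ : α₂ ≤ 0) (hα₃ : 0 < α₃) :
    ∃ C₁' C₂' : ℝ → ℝ → ℝ, IsCopula C₁' ∧ IsCopula C₂' ∧ ∀ x y,
      α₁ * C₁ x y + α₂ * C₂ x y = (α₁ + α₃) * C₁' x y + (α₂ - α₃) * C₂' x y := by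
  have hpos : 0 < α₁ + α₃ := by linarith
  have hneg : α₂ - α₃ < 0 := by linarith
  refine ⟨fun x y => α₁ / (α₁ + α₃) * C₁ x y + α₃ / (α₁ + α₃) * C₃ x y,
    fun x y => α₂ / (α₂ - α₃) * C₂ x y + -α₃ / (α₂ - α₃) * C₃ x y,
    .of_eqOn_convex_combination hC₁ hC₃ (by positivity) (by positivity)
      (by field_simp) (fun _ _ _ _ => rfl),
    .of_eqOn_convex_combination hC₂ hC₃ (div_nonneg_of_nonpos hα₂ hneg.le)
      (div_nonneg_of_nonpos (by linarith) hneg.le) (by field_simp [hneg.ne]; ring)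
      (fun _ _ _ _ => rfl),
    fun x y => ?_⟩
  field_simp [hneg.ne]
  ring

theorem stmt19_general (Q C₁ C₂ : ℝ → ℝ → ℝ) (α₁ α₂ : ℝ)
    (hproper : ¬ IsCopula Q)
    (hC₁ : IsCopula C₁) (hC₂ : IsCopula C₂)
    (hsum : α₁ + α₂ = 1)
    (hrep : ∀ x ∈ Icc (0:ℝ) 1, ∀ y ∈ Icc (0:ℝ) 1,
      Q x y = α₁ * C₁ x y + α₂ * C₂ x y) :
    ((α₁ < 0 ∧ 0 ≤ α₂) ∨ (α₂ < 0 ∧ 0 ≤ α₁)) ∧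
    (α₂ < 0 → ∀ (C₃ : ℝ → ℝ → ℝ) (α₃ : ℝ), IsCopula C₃ → 0 < α₃ →
      ∃ C₁' C₂' : ℝ → ℝ → ℝ, IsCopula C₁' ∧ IsCopula C₂' ∧
        (∀ x ∈ Icc (0:ℝ) 1, ∀ y ∈ Icc (0:ℝ) 1,
          Q x y = (α₁ + α₃) * C₁' x y + (α₂ - α₃) * C₂' x y) ∧
        |α₁| + |α₂| < |α₁ + α₃| + |α₂ - α₃|) := by
  refine ⟨coeff_neg_of_not_isCopula hproper hC₁ hC₂ hsum hrep, fun hα₂ C₃ α₃ hC₃ hα₃ => ?_⟩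
  have hα₁ : 0 < α₁ := by linarith
  obtain ⟨C₁', C₂', hC₁', hC₂', hshift⟩ :=
    exists_isCopula_shift_coeffs hC₁ hC₂ hC₃ hα₁.le hα₂.le hα₃
  refine ⟨C₁', C₂', hC₁', hC₂', fun x hx y hy => (hrep x hx y hy).trans (hshift x y), ?_⟩
  rw [abs_of_pos hα₁, abs_of_neg hα₂, abs_of_pos (by linarith), abs_of_neg (by linarith)]
  linarith

theorem stmt19 (Q C₁ C₂ : ℝ → ℝ → ℝ) (α₁ α₂ : ℝ)
    (hQ : IsQuasiCopula Q) (hproper : ¬ IsCopula Q)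
    (hC₁ : IsCopula C₁) (hC₂ : IsCopula C₂)
    (hsum : α₁ + α₂ = 1)
    (hrep : ∀ x ∈ Icc (0:ℝ) 1, ∀ y ∈ Icc (0:ℝ) 1,
      Q x y = α₁ * C₁ x y + α₂ * C₂ x y) :
    ((α₁ < 0 ∧ 0 ≤ α₂) ∨ (α₂ < 0 ∧ 0 ≤ α₁)) ∧
    (α₂ < 0 → ∀ (C₃ : ℝ → ℝ → ℝ) (α₃ : ℝ), IsCopula C₃ → 0 < α₃ →
      ∃ C₁' C₂' : ℝ → ℝ → ℝ, IsCopula C₁' ∧ IsCopula C₂' ∧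
        (∀ x ∈ Icc (0:ℝ) 1, ∀ y ∈ Icc (0:ℝ) 1,
          Q x y = (α₁ + α₃) * C₁' x y + (α₂ - α₃) * C₂' x y) ∧
        |α₁| + |α₂| < |α₁ + α₃| + |α₂ - α₃|) :=
  stmt19_general Q C₁ C₂ α₁ α₂ hproper hC₁ hC₂ hsum hrep
end
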